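/- arXiv:1909.10318 — 17 statements merged into one kernel-verified Lean document; each statement's English description precedes it below -/
import Mathlib

section
/- Let G be a semigroup, let χ: G → ℂ be a multiplicative function, let φ: G → G be a homomorphism, and let F: G → ℂ satisfy F(xy) + χ(y)·F(φ(y)x) = 0 for all x, y ∈ G. Then F(xyz) = 0 for all x, y, z ∈ G. Moreover, if every element of G can be written as a product of two elements of G (i.e. G = {xy | x, y ∈ G}), then F = 0. -/
/-- Lemma 3.1: If `G` is a semigroup, `χ : G → ℂ` is multiplicative, `φ : G → G` is a
homomorphism, and `F : G → ℂ` satisfies `F(xy) + χ(y)·F(φ(y)x) = 0` for all `x, y`, then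
`F(xyz) = 0` for all `x, y, z`; moreover `F = 0` if every element of `G` is a product
of two elements. -/
theorem wilson_lemma_triple_product_zero {G : Type*} [Semigroup G]
    (χ : G → ℂ) (hχ : ∀ x y : G, χ (x * y) = χ x * χ y)
    (φ : G → G) (hφ : ∀ x y : G, φ (x * y) = φ x * φ y)
    (F : G → ℂ) (hF : ∀ x y : G, F (x * y) + χ y * F (φ y * x) = 0) :
    (∀ x y z : G, F (x * y * z) = 0) ∧
      ((∀ g : G, ∃ x y : G, g = x * y) → F = 0) := by
  have key : ∀ x y z : G, F (x * y * z) = 0 := by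
    intro x y z
    have h1 := hF (x * y) z
    have h2 := hF (φ z * x) y
    have h3 := hF x (y * z)
    rw [hχ, hφ] at h3
    simp only [mul_assoc] at h1 h2 h3 ⊢
    linear_combination (h1 + h3 - χ z * h2) / 2
  refine ⟨key, fun hsurj => funext fun g => ?_⟩
  obtain ⟨x, y, rfl⟩ := hsurj g
  obtain ⟨a, b, rfl⟩ := hsurj x
  exact key a b y
end

section
/- Let G be a semigroup such that every element of G can be written as a product of two elements of G (i.e. G = {xy | x, y ∈ G}). If f, F: G → ℂ satisfy f(xy) = F(yx) for all x, y ∈ G, then f = F. -/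
/-- Lemma 3.2: If `G` is a semigroup in which every element is a product of two elements,
and `f, F : G → ℂ` satisfy `f(xy) = F(yx)` for all `x, y ∈ G`, then `f = F`. -/
theorem wilson_lemma_twisted_equal {G : Type*} [Semigroup G]
    (hG : ∀ g : G, ∃ x y : G, g = x * y)
    (f F : G → ℂ) (h : ∀ x y : G, f (x * y) = F (y * x)) :
    f = F := by
  have cyc1 : ∀ a b c : G, F (a * b * c) = F (b * c * a) := by
    intro a b c
    have h1 := h (c * a) b
    have h2 := h c (a * b)
    rw [mul_assoc] at h1
    rw [h2, ← mul_assoc] at h1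
    exact h1
  funext g
  obtain ⟨x, y, rfl⟩ := hG g
  obtain ⟨a, b, rfl⟩ := hG x
  calc f (a * b * y) = F (y * (a * b)) := h _ _
    _ = F (y * a * b) := by rw [mul_assoc]
    _ = F (a * b * y) := cyc1 y a b
end

section
/- Let f, g: S → ℂ satisfy f(xy) + μ(y)·f(σ(y)x) = 2f(x)g(y) for all x, y ∈ S. Suppose f ≠ 0 and f is central (f(xy) = f(yx) for all x, y ∈ S). Then g satisfies the μ-d'Alembert functional equation g(xy) + μ(y)·g(xσ(y)) = 2g(x)g(y) for all x, y ∈ S. -/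
/-- Lemma 4.1: If `(f, g)` solves `f(xy) + μ(y)f(σ(y)x) = 2f(x)g(y)` on a semigroup `S`
generated by its squares, `f ≠ 0` and `f` is central, then `g` satisfies the
μ-d'Alembert equation `g(xy) + μ(y)g(xσ(y)) = 2g(x)g(y)`. -/
theorem wilson_central_implies_dAlembert
{S : Type*} [Semigroup S]
    (hSq : Subsemigroup.closure {x : S | ∃ y : S, x = y * y} = ⊤)
    (σ : S → S) (hσmul : ∀ x y : S, σ (x * y) = σ x * σ y) (hσinv : ∀ x : S, σ (σ x) = x)
    (μ : S → ℂ) (hμmul : ∀ x y : S, μ (x * y) = μ x * μ y) (hμσ : ∀ x : S, μ (x * σ x) = 1)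
    (f g : S → ℂ)
    (hfg : ∀ x y : S, f (x * y) + μ y * f (σ y * x) = 2 * f x * g y)
    (hf0 : f ≠ 0) (hcentral : ∀ x y : S, f (x * y) = f (y * x)) :
    ∀ x y : S, g (x * y) + μ y * g (x * σ y) = 2 * g x * g y := by
  obtain ⟨x, hx⟩ := Function.ne_iff.mp hf0
  intro y z
  have hμz : μ z * μ (σ z) = 1 := by rw [← hμmul]; exact hμσ z
  have h1 := hfg x (y * z)
  have h2 := hfg x (y * σ z)
  have h3 := hfg (x * y) z
  have h4 := hfg (x * σ y) z
  have h5 := hfg x y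
  rw [hσmul, hμmul] at h1 h2
  rw [hσinv] at h2
  have e1 : f (x * (y * z)) = f (x * y * z) := by rw [mul_assoc]
  have e2 : f (x * (y * σ z)) = f (σ z * (x * y)) := by
    rw [← mul_assoc, hcentral (x * y) (σ z)]
  have e3 : f (σ y * z * x) = f (x * σ y * z) := by
    rw [hcentral (σ y * z) x, ← mul_assoc]
  have e4 : f (σ y * σ z * x) = f (σ z * (x * σ y)) := by
    rw [hcentral (σ y * σ z) x, ← mul_assoc, hcentral (x * σ y) (σ z)]
  have e5 : f (σ y * x) = f (x * σ y) := hcentral _ _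
  have key : 2 * f x * (g (y * z) + μ z * g (y * σ z)) = 2 * f x * (2 * g y * g z) := by
    linear_combination -h1 - μ z * h2 + h3 + μ y * h4 + 2 * g z * h5 -
      2 * μ y * g z * e5 + e1 + μ z * e2 + μ y * e3 + μ y * μ z * e4 +
      μ y * f (σ y * z * x) * hμz
  have h2fx : (2 : ℂ) * f x ≠ 0 := mul_ne_zero two_ne_zero hx
  exact mul_left_cancel₀ h2fx key
end

section
/- The pairs f, g: S → ℂ satisfying f(xy) + μ(y)·f(σ(y)x) = 2f(x)g(y) for all x, y ∈ S are exactly the following: (1) f = 0 and g arbitrary; (2) f = λχ + δχ* and g = (χ + χ*)/2, where χ: S → ℂ is a nonzero multiplicative function and λ, δ ∈ ℂ are constants with (λ, δ) ≠ (0, 0); (3) f = χ·(c + A) and g = χ on S \ I_χ while f = 0 and g = 0 on I_χ, where c ∈ ℂ is a constant, χ: S → ℂ is a nonzero multiplicative function with χ* = χ, and A: S \ I_χ → ℂ is a nonzero additive function with A∘σ = −A on S \ I_χ. -/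
/-!
Write `F* = μ · (F ∘ σ)`. Combining the equation with its starred form gives
`(f - f*)(x) · (g - g*)(y) = 0`, which forces `g* = g` as soon as `f ≠ 0`. Then the even part of `f`
is a multiple `c g` of `g`, while `φ = f - c g` is odd and satisfies the sine addition law
`φ(xy) = φ(x)g(y) + φ(y)g(x)`; hence `g(xy) = g(x)g(y) + κ φ(x)φ(y)` for a constant `κ`.
If `κ = s² ≠ 0` the functions `g ± sφ` are multiplicative and exchanged by `*` (case 2); if `κ = 0`
then `g` is multiplicative and `φ / g` is additive off the zeros of `g` (case 3). If `φ = 0`, then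
`g` solves the equation together with itself and, unless `g` is multiplicative, some
`x ↦ g(xq) - g(x)g(q)` takes the place of `φ`.
Generation by squares is what makes `g = 0` force `f = 0`, and makes `φ` vanish where `g` does.
-/

theorem mul_eq_zero_of_mul_add_mul_eq_zero {α K : Type*} [Field K] [CharZero K] {O D : α → K}
    (h : ∀ x y : α, O x * D y + O y * D x = 0) (x y : α) : O x * D y = 0 := by
  have hdiag : O x * D x = 0 := by linear_combination h x x / 2
  exact mul_self_eq_zero.mp (by linear_combination O x * D y * h x y - O y * D y * hdiag)

section

variable {S : Type*} [Semigroup S]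

structure IsWeightedInvolution (σ : S → S) (μ : S → ℂ) : Prop where
  map_mul : ∀ x y : S, σ (x * y) = σ x * σ y
  involutive : ∀ x : S, σ (σ x) = x
  weight_mul : ∀ x y : S, μ (x * y) = μ x * μ y
  weight_mul_weight : ∀ x : S, μ x * μ (σ x) = 1

namespace IsWeightedInvolution

variable {σ : S → S} {μ : S → ℂ}

theorem weight_ne_zero (hσμ : IsWeightedInvolution σ μ) (x : S) : μ x ≠ 0 :=
  left_ne_zero_of_mul_eq_one (hσμ.weight_mul_weight x)

theorem weight_mul_weight_mul (hσμ : IsWeightedInvolution σ μ) (F : S → ℂ) (x : S) :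
    μ x * (μ (σ x) * F (σ (σ x))) = F x := by
  rw [hσμ.involutive, ← mul_assoc, hσμ.weight_mul_weight, one_mul]

end IsWeightedInvolution

def WilsonVariant (σ : S → S) (μ : S → ℂ) (f g : S → ℂ) : Prop :=
  ∀ x y : S, f (x * y) + μ y * f (σ y * x) = 2 * f x * g y

def ExponentialSolution (σ : S → S) (μ : S → ℂ) (f g : S → ℂ) : Prop :=
  ∃ χ : S → ℂ, (∀ x y : S, χ (x * y) = χ x * χ y) ∧ χ ≠ 0 ∧
    ∃ lam del : ℂ, (lam, del) ≠ (0, 0) ∧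
      (∀ x : S, f x = lam * χ x + del * (μ x * χ (σ x))) ∧
      (∀ x : S, g x = (χ x + μ x * χ (σ x)) / 2)

def AdditiveSolution (σ : S → S) (μ : S → ℂ) (f g : S → ℂ) : Prop :=
  ∃ χ : S → ℂ, (∀ x y : S, χ (x * y) = χ x * χ y) ∧ χ ≠ 0 ∧
    (∀ x : S, μ x * χ (σ x) = χ x) ∧
    ∃ c : ℂ, ∃ A : S → ℂ,
      (∀ x y : S, χ x ≠ 0 → χ y ≠ 0 → A (x * y) = A x + A y) ∧
      (∃ x : S, χ x ≠ 0 ∧ A x ≠ 0) ∧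
      (∀ x : S, χ x ≠ 0 → A (σ x) = -A x) ∧
      (∀ x : S, χ x ≠ 0 → f x = χ x * (c + A x)) ∧
      (∀ x : S, χ x = 0 → f x = 0) ∧
      (∀ x : S, χ x ≠ 0 → g x = χ x) ∧
      (∀ x : S, χ x = 0 → g x = 0)

theorem exists_mul_eq_of_map_eq_zero
    (hSq : Subsemigroup.closure {x : S | ∃ y : S, x = y * y} = ⊤)
    {χ : S → ℂ} (hχ : ∀ x y : S, χ (x * y) = χ x * χ y) {p : S} (hp : χ p = 0) :
    ∃ u v : S, p = u * v ∧ χ u = 0 ∧ χ v = 0 := by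
  have hmem : p ∈ Subsemigroup.closure {x : S | ∃ y : S, x = y * y} := hSq ▸ trivial
  induction hmem using Subsemigroup.closure_induction with
  | mem a ha =>
    obtain ⟨y, rfl⟩ := ha
    have hy : χ y = 0 := mul_self_eq_zero.mp ((hχ y y).symm.trans hp)
    exact ⟨y, y, rfl, hy, hy⟩
  | mul a b _ _ iha ihb =>
    rcases mul_eq_zero.mp ((hχ a b).symm.trans hp) with ha | hb
    · obtain ⟨u, v, rfl, hu, hv⟩ := iha ha
      exact ⟨u, v * b, mul_assoc u v b, hu, by rw [hχ, hv, zero_mul]⟩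
    · obtain ⟨u, v, rfl, hu, hv⟩ := ihb hb
      exact ⟨a * u, v, (mul_assoc a u v).symm, by rw [hχ, hu, mul_zero], hv⟩

theorem exists_cosine_of_sine_addition {g φ : S → ℂ}
    (hφ : ∀ x y : S, φ (x * y) = φ x * g y + φ y * g x) {p : S} (hp : φ p ≠ 0) :
    ∃ κ : ℂ, ∀ x y : S, g (x * y) = g x * g y + κ * (φ x * φ y) := by
  -- expand `φ (x * y * z)` in the two ways allowed by associativity
  have key : ∀ x y z : S,
      φ x * (g (y * z) - g y * g z) = φ z * (g (x * y) - g x * g y) := by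
    intro x y z
    have h := congrArg φ (mul_assoc x y z)
    rw [hφ, hφ, hφ x, hφ y] at h
    linear_combination -h
  refine ⟨(g (p * p) - g p * g p) / (φ p * φ p), fun x y => ?_⟩
  field_simp
  linear_combination -(φ p * key x y p) - φ x * key y p p

namespace WilsonVariant

variable {σ : S → S} {μ : S → ℂ} {f g : S → ℂ}

theorem sub_star (hσμ : IsWeightedInvolution σ μ) (hW : WilsonVariant σ μ f g) (x y : S) :
    f (x * y) - μ (x * y) * f (σ (x * y)) = 2 * f x * g y - 2 * (μ y * f (σ y)) * g x := by
  have h := hW (σ y) x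
  rw [← hσμ.map_mul] at h
  linear_combination hW x y - μ y * h - f (σ (x * y)) * hσμ.weight_mul x y

theorem star (hσμ : IsWeightedInvolution σ μ) (hW : WilsonVariant σ μ f g) :
    WilsonVariant σ μ (fun x => μ x * f (σ x)) (fun x => μ x * g (σ x)) := by
  intro x y
  have h := hW (σ x) (σ y)
  rw [hσμ.involutive] at h
  simp only [hσμ.map_mul, hσμ.involutive, hσμ.weight_mul]
  linear_combination μ x * μ y * h

theorem star_sub (hσμ : IsWeightedInvolution σ μ) (hW : WilsonVariant σ μ f g) (x y : S) :
    μ (x * y) * f (σ (x * y)) - f (x * y)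
      = 2 * (μ x * f (σ x)) * (μ y * g (σ y)) - 2 * f y * (μ x * g (σ x)) := by
  have h := (hW.star hσμ).sub_star hσμ x y
  linear_combination h + hσμ.weight_mul_weight_mul f (x * y)
    - 2 * (μ x * g (σ x)) * hσμ.weight_mul_weight_mul f y

theorem mul_sub_mul (hσμ : IsWeightedInvolution σ μ) (hW : WilsonVariant σ μ f g) (x y : S) :
    f x * g y - μ y * f (σ y) * g x
      = f y * (μ x * g (σ x)) - μ x * f (σ x) * (μ y * g (σ y)) := by
  linear_combination (-hW.sub_star hσμ x y - hW.star_sub hσμ x y) / 2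

theorem sub_star_mul_sub_star_eq_zero (hσμ : IsWeightedInvolution σ μ)
    (hW : WilsonVariant σ μ f g) (x y : S) :
    (f x - μ x * f (σ x)) * (g y - μ y * g (σ y)) = 0 :=
  mul_eq_zero_of_mul_add_mul_eq_zero (O := fun x => f x - μ x * f (σ x))
    (D := fun y => g y - μ y * g (σ y))
    (fun x y => by linear_combination hW.mul_sub_mul hσμ x y + hW.mul_sub_mul hσμ y x) x y

theorem star_right_eq (hσμ : IsWeightedInvolution σ μ) (hW : WilsonVariant σ μ f g)
    (hf : f ≠ 0) (x : S) : μ x * g (σ x) = g x := by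
  by_cases hodd : ∃ b, f b - μ b * f (σ b) ≠ 0
  · obtain ⟨b, hb⟩ := hodd
    exact (sub_eq_zero.mp
      ((mul_eq_zero.mp (hW.sub_star_mul_sub_star_eq_zero hσμ b x)).resolve_left hb)).symm
  push Not at hodd
  obtain ⟨a, ha⟩ : ∃ a, f a ≠ 0 := Function.ne_iff.mp hf
  -- as `f* = f`, the starred equation at `(a, x)` is the original one with `g*` in place of `g`
  have h := hW.star hσμ a x
  simp only at h
  have key : f a * (μ x * g (σ x) - g x) = 0 := by
    linear_combination (hW a x - h - hodd (a * x) - μ x * hodd (σ x * a)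
      + 2 * μ x * g (σ x) * hodd a) / 2
  exact sub_eq_zero.mp ((mul_eq_zero.mp key).resolve_left ha)

theorem eq_zero_of_right_eq_zero (hSq : Subsemigroup.closure {x : S | ∃ y : S, x = y * y} = ⊤)
    (hσμ : IsWeightedInvolution σ μ) (hW : WilsonVariant σ μ f 0) : f = 0 := by
  have hW0 : ∀ x y : S, f (x * y) + μ y * f (σ y * x) = 0 := fun x y => by
    simpa using hW x y
  have hσsq : ∀ y x : S, f (σ (y * y) * x) = 0 := by
    intro y x
    have h1 := hW0 (x * y) y
    have h2 := hW0 (σ y * x) y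
    have h3 := hW0 x (y * y)
    rw [← mul_assoc] at h1
    rw [← mul_assoc, ← hσμ.map_mul] at h2
    rw [← mul_assoc, hσμ.weight_mul] at h3
    have key : 2 * (μ y * μ y) * f (σ (y * y) * x) = 0 := by
      linear_combination h3 - h1 + μ y * h2
    simpa [hσμ.weight_ne_zero y] using key
  have hsq : ∀ y x : S, f (y * y * x) = 0 := fun y x => by
    simpa [hσμ.map_mul, hσμ.involutive] using hσsq (σ y) x
  have hleft : ∀ p x : S, f (p * x) = 0 := by
    intro p
    have hp : p ∈ Subsemigroup.closure {x : S | ∃ y : S, x = y * y} := hSq ▸ trivial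
    induction hp using Subsemigroup.closure_induction with
    | mem a ha => obtain ⟨y, rfl⟩ := ha; exact hsq y
    | mul a b _ _ iha _ => intro x; rw [mul_assoc]; exact iha (b * x)
  funext p
  obtain ⟨u, v, rfl, -, -⟩ := exists_mul_eq_of_map_eq_zero hSq (χ := 0) (by simp) (p := p) rfl
  exact hleft u v

theorem exists_add_star_eq (hσμ : IsWeightedInvolution σ μ) (hW : WilsonVariant σ μ f g)
    (hg : ∀ x : S, μ x * g (σ x) = g x) (hg0 : g ≠ 0) :
    ∃ c : ℂ, ∀ x : S, f x + μ x * f (σ x) = 2 * c * g x := by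
  obtain ⟨y, hy⟩ : ∃ y, g y ≠ 0 := Function.ne_iff.mp hg0
  refine ⟨(f y + μ y * f (σ y)) / (2 * g y), fun x => ?_⟩
  have key : (f x + μ x * f (σ x)) * g y = (f y + μ y * f (σ y)) * g x := by
    linear_combination hW.mul_sub_mul hσμ x y + f y * hg x - μ x * f (σ x) * hg y
  field_simp
  linear_combination key

theorem sine_addition_sub (hσμ : IsWeightedInvolution σ μ) (hW : WilsonVariant σ μ f g)
    (hg : ∀ x : S, μ x * g (σ x) = g x) {c : ℂ}
    (hc : ∀ x : S, f x + μ x * f (σ x) = 2 * c * g x) (x y : S) :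
    f (x * y) - c * g (x * y) = (f x - c * g x) * g y + (f y - c * g y) * g x := by
  linear_combination (hW.sub_star hσμ x y - hW.star_sub hσμ x y) / 4 + hc (x * y) / 2
    - g y / 2 * hc x - g x / 2 * hc y + f y / 2 * hg x - μ x * f (σ x) / 2 * hg y

theorem self_of_eq_const_mul (hW : WilsonVariant σ μ f g) {c : ℂ} (hc : c ≠ 0)
    (hf : ∀ x : S, f x = c * g x) : WilsonVariant σ μ g g := by
  intro x y
  have h := hW x y
  rw [hf, hf, hf] at h
  exact mul_left_cancel₀ hc (by linear_combination h)

theorem sine_addition_of_self (hσμ : IsWeightedInvolution σ μ) (hW : WilsonVariant σ μ g g)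
    (q x y : S) :
    g (x * y * q) - g (x * y) * g q
      = (g (x * q) - g x * g q) * g y + (g (y * q) - g y * g q) * g x := by
  have h1 := hW (x * y) q
  have h2 := hW (σ q * x) y
  have h3 := hW x q
  have h4 := hW x (y * q)
  rw [← mul_assoc (σ q) x y] at h1
  rw [← mul_assoc, ← hσμ.map_mul] at h2
  rw [← mul_assoc] at h4
  linear_combination
    (h1 - μ q * h2 - 2 * g y * h3 + h4 - g (σ (y * q) * x) * hσμ.weight_mul y q) / 2

theorem exists_sine_of_self (hσμ : IsWeightedInvolution σ μ) (hW : WilsonVariant σ μ g g)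
    (hg : ∀ x : S, μ x * g (σ x) = g x) :
    ∃ (φ : S → ℂ) (κ : ℂ), κ ≠ 0 ∧ (∀ x y : S, g (x * y) = g x * g y + κ * (φ x * φ y)) ∧
      (∀ x y : S, φ (x * y) = φ x * g y + φ y * g x) ∧ ∀ x : S, μ x * φ (σ x) = -φ x := by
  by_cases hmul : ∀ x y : S, g (x * y) = g x * g y
  · exact ⟨0, 1, one_ne_zero, by simpa using hmul, by simp, by simp⟩
  push Not at hmul
  obtain ⟨p, q, hpq⟩ := hmul
  set φ : S → ℂ := fun x => g (x * q) - g x * g q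
  have hsin : ∀ x y : S, φ (x * y) = φ x * g y + φ y * g x :=
    hW.sine_addition_of_self hσμ q
  obtain ⟨κ, hcos⟩ := exists_cosine_of_sine_addition hsin (sub_ne_zero.mpr hpq : φ p ≠ 0)
  have hφq : φ q * (κ * φ q - 1) = 0 := by linear_combination -hcos q q
  have hκφq : κ * φ q = 1 := by
    refine sub_eq_zero.mp ((mul_eq_zero.mp hφq).resolve_left fun hq => hpq ?_)
    simpa [hq] using hcos p q
  refine ⟨φ, κ, left_ne_zero_of_mul_eq_one hκφq, hcos, hsin, fun x => ?_⟩
  linear_combination hW q x - hcos q x - g q * hg x - φ x * hκφq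

end WilsonVariant

theorem exponentialSolution_of_sine_addition {σ : S → S} {μ : S → ℂ} {f g φ : S → ℂ}
    {κ c d : ℂ} (hκ : κ ≠ 0) (hcos : ∀ x y : S, g (x * y) = g x * g y + κ * (φ x * φ y))
    (hsin : ∀ x y : S, φ (x * y) = φ x * g y + φ y * g x)
    (hg : ∀ x : S, μ x * g (σ x) = g x) (hφ : ∀ x : S, μ x * φ (σ x) = -φ x) (hg0 : g ≠ 0)
    (hcd : (c, d) ≠ (0, 0)) (hf : ∀ x : S, f x = c * g x + d * φ x) :
    ExponentialSolution σ μ f g := by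
  obtain ⟨s, hs⟩ := IsAlgClosed.exists_pow_nat_eq κ two_pos
  have hs0 : s ≠ 0 := by rintro rfl; exact hκ (by simpa using hs.symm)
  have hstar : ∀ x : S, μ x * (g (σ x) + s * φ (σ x)) = g x - s * φ x := fun x => by
    linear_combination hg x + s * hφ x
  refine ⟨fun x => g x + s * φ x, fun x y => ?_, fun h0 => hg0 (funext fun x => ?_),
    c / 2 + d / (2 * s), c / 2 - d / (2 * s), fun h => hcd ?_, fun x => ?_, fun x => ?_⟩
  · linear_combination hcos x y + s * hsin x y - φ x * φ y * hs
  · have h1 : g x + s * φ x = 0 := congrFun h0 x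
    have h2 : g (σ x) + s * φ (σ x) = 0 := congrFun h0 (σ x)
    show g x = 0
    linear_combination (h1 - hstar x + μ x * h2) / 2
  · simp only [Prod.mk.injEq] at h ⊢
    constructor
    · linear_combination h.1 + h.2
    · field_simp at h
      linear_combination (h.1 - h.2) / 2
  · rw [hstar, hf]
    field_simp
    ring
  · rw [hstar]
    ring

theorem additiveSolution_of_sine_addition
    (hSq : Subsemigroup.closure {x : S | ∃ y : S, x = y * y} = ⊤)
    {σ : S → S} {μ : S → ℂ} {f g φ : S → ℂ} {c : ℂ} (hmul : ∀ x y : S, g (x * y) = g x * g y)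
    (hsin : ∀ x y : S, φ (x * y) = φ x * g y + φ y * g x)
    (hg : ∀ x : S, μ x * g (σ x) = g x) (hφ : ∀ x : S, μ x * φ (σ x) = -φ x)
    {p : S} (hp : φ p ≠ 0) (hf : ∀ x : S, f x = c * g x + φ x) :
    AdditiveSolution σ μ f g := by
  have hvanish : ∀ x : S, g x = 0 → φ x = 0 := by
    intro x hx
    obtain ⟨u, v, rfl, hu, hv⟩ := exists_mul_eq_of_map_eq_zero hSq hmul hx
    simp [hsin, hu, hv]
  have hgp : g p ≠ 0 := fun h => hp (hvanish p h)
  refine ⟨g, hmul, Function.ne_iff.mpr ⟨p, hgp⟩, hg, c, fun x => φ x / g x,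
    fun x y hx hy => ?_, ⟨p, hgp, div_ne_zero hp hgp⟩, fun x hx => ?_, fun x hx => ?_,
    fun x hx => ?_, fun _ _ => rfl, fun _ h => h⟩
  · simp only [hsin, hmul]
    field_simp
  · have hσx : g (σ x) ≠ 0 := fun h => hx (by rw [← hg x, h, mul_zero])
    simp only
    field_simp
    linear_combination g (σ x) * hφ x - φ (σ x) * hg x
  · rw [hf]
    field_simp
  · simp [hf, hvanish x hx, hx]

theorem ExponentialSolution.wilsonVariant {σ : S → S} {μ : S → ℂ} {f g : S → ℂ}
    (hσμ : IsWeightedInvolution σ μ) (h : ExponentialSolution σ μ f g) :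
    WilsonVariant σ μ f g := by
  obtain ⟨χ, hχ, -, lam, del, -, hf, hg⟩ := h
  intro x y
  rw [hf, hf, hf, hg, hχ, hχ, hσμ.map_mul, hσμ.map_mul, hσμ.involutive, hχ, hχ,
    hσμ.weight_mul, hσμ.weight_mul]
  linear_combination del * μ x * χ (σ x) * χ y * hσμ.weight_mul_weight y

theorem AdditiveSolution.wilsonVariant {σ : S → S} {μ : S → ℂ} {f g : S → ℂ}
    (hσμ : IsWeightedInvolution σ μ) (h : AdditiveSolution σ μ f g) :
    WilsonVariant σ μ f g := by
  obtain ⟨χ, hχ, -, hχσ, c, A, hA, -, hAσ, hf, hf0, hg, hg0⟩ := h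
  have hσ_eq_zero : ∀ y : S, χ (σ y) = 0 ↔ χ y = 0 := fun y => by
    rw [← hχσ y, mul_eq_zero, or_iff_right (hσμ.weight_ne_zero y)]
  intro x y
  by_cases hy : χ y = 0
  · rw [hf0 _ (by rw [hχ, hy, mul_zero]), hf0 _ (by rw [hχ, (hσ_eq_zero y).mpr hy, zero_mul]),
      hg0 y hy]
    ring
  by_cases hx : χ x = 0
  · rw [hf0 _ (by rw [hχ, hx, zero_mul]), hf0 _ (by rw [hχ, hx, mul_zero]), hf0 x hx]
    ring
  have hσy : χ (σ y) ≠ 0 := (hσ_eq_zero y).not.mpr hy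
  rw [hf _ (by rw [hχ]; exact mul_ne_zero hx hy), hf _ (by rw [hχ]; exact mul_ne_zero hσy hx),
    hf x hx, hg y hy, hA x y hx hy, hA (σ y) x hσy hx, hAσ y hy, hχ, hχ]
  linear_combination χ x * (c - A y + A x) * hχσ y

theorem WilsonVariant.eq_zero_or_exponentialSolution_or_additiveSolution
    (hSq : Subsemigroup.closure {x : S | ∃ y : S, x = y * y} = ⊤)
    {σ : S → S} {μ : S → ℂ} {f g : S → ℂ} (hσμ : IsWeightedInvolution σ μ)
    (hW : WilsonVariant σ μ f g) :
    f = 0 ∨ ExponentialSolution σ μ f g ∨ AdditiveSolution σ μ f g := by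
  refine or_iff_not_imp_left.mpr fun hf => ?_
  have hg := hW.star_right_eq hσμ hf
  have hg0 : g ≠ 0 := by rintro rfl; exact hf (hW.eq_zero_of_right_eq_zero hSq hσμ)
  obtain ⟨c, hc⟩ := hW.exists_add_star_eq hσμ hg hg0
  set φ : S → ℂ := fun x => f x - c * g x
  have hsin : ∀ x y : S, φ (x * y) = φ x * g y + φ y * g x := hW.sine_addition_sub hσμ hg hc
  have hφ : ∀ x : S, μ x * φ (σ x) = -φ x := fun x => by linear_combination hc x - c * hg x
  by_cases hφ0 : ∃ p, φ p ≠ 0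
  · obtain ⟨p, hp⟩ := hφ0
    obtain ⟨κ, hcos⟩ := exists_cosine_of_sine_addition hsin hp
    rcases eq_or_ne κ 0 with rfl | hκ
    · exact Or.inr (additiveSolution_of_sine_addition hSq (by simpa using hcos) hsin hg hφ hp
        fun x => by ring)
    · exact Or.inl (exponentialSolution_of_sine_addition hκ hcos hsin hg hφ hg0 (d := 1)
        (by simp) fun x => by ring)
  push Not at hφ0
  have hc0 : c ≠ 0 := by
    rintro rfl
    exact hf (funext fun x => by simpa [φ] using hφ0 x)
  have hfg : ∀ x : S, f x = c * g x := fun x => sub_eq_zero.mp (hφ0 x)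
  obtain ⟨ψ, κ, hκ, hcos, hsin', hψ⟩ :=
    (hW.self_of_eq_const_mul hc0 hfg).exists_sine_of_self hσμ hg
  exact Or.inl (exponentialSolution_of_sine_addition hκ hcos hsin' hg hψ hg0 (c := c) (d := 0)
    (by simp [hc0]) fun x => by simp [hfg])

end

/-- Theorem 4.2: classification of the solutions of the variant of Wilson's functional
equation `f(xy) + μ(y)f(σ(y)x) = 2f(x)g(y)` on a semigroup generated by its squares. -/
theorem wilson_variant_first_equation_solutions
{S : Type*} [Semigroup S]
    (hSq : Subsemigroup.closure {x : S | ∃ y : S, x = y * y} = ⊤)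
    (σ : S → S) (hσmul : ∀ x y : S, σ (x * y) = σ x * σ y) (hσinv : ∀ x : S, σ (σ x) = x)
    (μ : S → ℂ) (hμmul : ∀ x y : S, μ (x * y) = μ x * μ y) (hμσ : ∀ x : S, μ (x * σ x) = 1)
    (f g : S → ℂ) :
    (∀ x y : S, f (x * y) + μ y * f (σ y * x) = 2 * f x * g y) ↔
      (f = 0) ∨
      (∃ χ : S → ℂ, (∀ x y : S, χ (x * y) = χ x * χ y) ∧ χ ≠ 0 ∧
        ∃ lam del : ℂ, (lam, del) ≠ (0, 0) ∧
          (∀ x : S, f x = lam * χ x + del * (μ x * χ (σ x))) ∧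
          (∀ x : S, g x = (χ x + μ x * χ (σ x)) / 2)) ∨
      (∃ χ : S → ℂ, (∀ x y : S, χ (x * y) = χ x * χ y) ∧ χ ≠ 0 ∧
        (∀ x : S, μ x * χ (σ x) = χ x) ∧
        ∃ c : ℂ, ∃ A : S → ℂ,
          (∀ x y : S, χ x ≠ 0 → χ y ≠ 0 → A (x * y) = A x + A y) ∧
          (∃ x : S, χ x ≠ 0 ∧ A x ≠ 0) ∧
          (∀ x : S, χ x ≠ 0 → A (σ x) = -A x) ∧
          (∀ x : S, χ x ≠ 0 → f x = χ x * (c + A x)) ∧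
          (∀ x : S, χ x = 0 → f x = 0) ∧
          (∀ x : S, χ x ≠ 0 → g x = χ x) ∧
          (∀ x : S, χ x = 0 → g x = 0)) := by
  have hσμ : IsWeightedInvolution σ μ :=
    ⟨hσmul, hσinv, hμmul, fun x => (hμmul x (σ x)).symm.trans (hμσ x)⟩
  refine ⟨WilsonVariant.eq_zero_or_exponentialSolution_or_additiveSolution hSq hσμ, ?_⟩
  rintro (rfl | h | h)
  · intro x y
    simp
  · exact ExponentialSolution.wilsonVariant hσμ h
  · exact AdditiveSolution.wilsonVariant hσμ h
end

section
/- The pairs f, g: S → ℂ satisfying f(xy) + μ(y)·f(σ(y)x) = 2f(y)g(x) for all x, y ∈ S are exactly the following: (1) f = 0 and g arbitrary; (2) f = α·(χ + χ*)/2 and g = (χ + χ*)/2, where α ∈ ℂ \ {0} is a constant and χ: S → ℂ is a multiplicative function. -/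
private lemma chi_mul_helper (X1 X2 X3 X4 a b c s : ℂ) (hs0 : s ≠ 0)
    (k : X2 - X1 * c = a * (X4 - b * c) + b * (X3 - a * c))
    (hl : (X3 - a * c) * (X4 - b * c) = (X1 - a * b) * s ^ 2) :
    X1 + (X2 - X1 * c) / s = (a + (X3 - a * c) / s) * (b + (X4 - b * c) / s) := by
  have hl' : X1 - a * b = (X3 - a * c) / s * ((X4 - b * c) / s) := by
    rw [div_mul_div_comm, hl]
    rw [show s * s = s ^ 2 by ring, mul_div_assoc, div_self (pow_ne_zero 2 hs0), mul_one]
  rw [k]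
  linear_combination hl'

theorem dalembert_variant_aux {S : Type*} [Semigroup S]
    (σ : S → S) (hσmul : ∀ x y : S, σ (x * y) = σ x * σ y)
    (μ : S → ℂ) (hμmul : ∀ x y : S, μ (x * y) = μ x * μ y)
    (g : S → ℂ)
    (hdA : ∀ x y : S, g (x * y) + μ y * g (σ y * x) = 2 * g x * g y)
    (heven : ∀ x : S, μ x * g (σ x) = g x) :
    ∃ χ : S → ℂ, (∀ x y : S, χ (x * y) = χ x * χ y) ∧
      ∀ x : S, g x = (χ x + μ x * χ (σ x)) / 2 := by
  have hdef : ∀ x y : S, μ y * g (σ y * x) = 2 * g x * g y - g (x * y) := fun x y => by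
    linear_combination hdA x y
  have A4 : ∀ x y z : S, g (x * (y * z)) =
      g x * g (y * z) + g (x * y) * g z - μ z * g (σ z * x) * g y := by
    intro x y z
    have e1 := hdA (x * y) z
    have e2 := hdA (σ z * x) y
    have e3 := hdA x (y * z)
    rw [hμmul, hσmul] at e3
    simp only [mul_assoc] at e1 e2 e3 ⊢
    linear_combination (e1 - μ z * e2 + e3) / 2
  have K1 : ∀ x y z : S, g (x * (y * z)) - g (x * y) * g z =
      g x * (g (y * z) - g y * g z) + g y * (g (x * z) - g x * g z) := fun x y z => by
    linear_combination A4 x y z - g y * hdef x z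
  have K2 : ∀ x y z : S, g (x * (y * z)) - g x * g (y * z) =
      g z * (g (x * y) - g x * g y) + g y * (g (x * z) - g x * g z) := fun x y z => by
    linear_combination A4 x y z - g y * hdef x z
  have hQ : ∀ x y z w : S, g (x * y) * g (z * w) - μ (z * w) * g (σ (z * w) * x) * g y =
      g (x * (y * z)) * g w - μ w * g (σ w * x) * g (y * z) := by
    intro x y z w
    have e1 := A4 x y (z * w)
    have e2 := A4 x (y * z) w
    simp only [mul_assoc] at e1 e2 ⊢
    linear_combination e2 - e1
  have hstar : ∀ x y z w : S,
      (g (x * y) - g x * g y) * (g (z * w) - g z * g w) =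
      (g (x * w) - g x * g w) * (g (y * z) - g y * g z) := by
    intro x y z w
    have q := hQ x y z w
    have d1 := hdef x (z * w)
    have d2 := hdef x w
    have k1 := K1 x y z
    have k2 := K2 x z w
    linear_combination q + g y * d1 - g (y * z) * d2 + g w * k1 - g y * k2
  by_cases hψ0 : ∀ x y : S, g (x * y) = g x * g y
  · exact ⟨g, hψ0, fun x => by rw [heven x]; ring⟩
  · push_neg at hψ0
    obtain ⟨t, y₁, hne⟩ := hψ0
    have hne' : g (t * y₁) - g t * g y₁ ≠ 0 := sub_ne_zero.mpr hne
    have htt : g (t * t) - g t * g t ≠ 0 := by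
      intro h0
      apply hne'
      have h := hstar t t y₁ y₁
      rw [h0, zero_mul] at h
      exact mul_self_eq_zero.mp h.symm
    obtain ⟨s, hs⟩ : ∃ s : ℂ, s ^ 2 = g (t * t) - g t * g t :=
      IsAlgClosed.exists_pow_nat_eq _ (by norm_num : (0:ℕ) < 2)
    have hs0 : s ≠ 0 := by
      intro h
      apply htt
      rw [← hs, h]; ring
    have hsym : ∀ y : S, g (t * y) - g t * g y = g (y * t) - g y * g t := by
      intro y
      have h1 := hstar y t y t
      have h2 := hstar t y t y
      have h3 : ((g (y * t) - g y * g t) - (g (t * y) - g t * g y)) ^ 2 = 0 := by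
        linear_combination h1 + h2
      have h4 := pow_eq_zero_iff (two_ne_zero) |>.mp h3
      exact (sub_eq_zero.mp h4).symm
    have hLL : ∀ x y : S, (g (x * t) - g x * g t) * (g (y * t) - g y * g t) =
        (g (x * y) - g x * g y) * s ^ 2 := by
      intro x y
      have h := hstar x t t y
      linear_combination h - (g (x * t) - g x * g t) * hsym y - (g (x * y) - g x * g y) * hs
    have hodd : ∀ y : S, μ y * (g (σ y * t) - g (σ y) * g t) = -(g (y * t) - g y * g t) := by
      intro y
      have hd := hdef t y
      have he := heven y
      have hsy := hsym y
      linear_combination hd - g t * he - hsy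
    refine ⟨fun x => g x + (g (x * t) - g x * g t) / s, ?_, ?_⟩
    · intro x y
      show g (x * y) + (g (x * y * t) - g (x * y) * g t) / s =
        (g x + (g (x * t) - g x * g t) / s) * (g y + (g (y * t) - g y * g t) / s)
      have k := K1 x y t
      have hl := hLL x y
      simp only [mul_assoc] at k ⊢
      exact chi_mul_helper _ _ _ _ _ _ _ _ hs0 k hl
    · intro x
      show g x = ((g x + (g (x * t) - g x * g t) / s) +
        μ x * (g (σ x) + (g (σ x * t) - g (σ x) * g t) / s)) / 2
      have he := heven x
      have ho := hodd x
      linear_combination -he/2 - ho/(2*s)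

/-- Theorem 5.1: classification of the solutions of the variant of Wilson's functional
equation `f(xy) + μ(y)f(σ(y)x) = 2f(y)g(x)` on a semigroup generated by its squares. -/
theorem wilson_variant_second_equation_solutions
{S : Type*} [Semigroup S]
    (hSq : Subsemigroup.closure {x : S | ∃ y : S, x = y * y} = ⊤)
    (σ : S → S) (hσmul : ∀ x y : S, σ (x * y) = σ x * σ y) (hσinv : ∀ x : S, σ (σ x) = x)
    (μ : S → ℂ) (hμmul : ∀ x y : S, μ (x * y) = μ x * μ y) (hμσ : ∀ x : S, μ (x * σ x) = 1)
    (f g : S → ℂ) :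
    (∀ x y : S, f (x * y) + μ y * f (σ y * x) = 2 * f y * g x) ↔
      (f = 0) ∨
      (∃ α : ℂ, α ≠ 0 ∧ ∃ χ : S → ℂ, (∀ x y : S, χ (x * y) = χ x * χ y) ∧
        (∀ x : S, f x = α * ((χ x + μ x * χ (σ x)) / 2)) ∧
        (∀ x : S, g x = (χ x + μ x * χ (σ x)) / 2)) := by
  have hμinv : ∀ y : S, μ y * μ (σ y) = 1 := fun y => by
    have h := hμσ y; rwa [hμmul] at h
  have hμne : ∀ y : S, μ y ≠ 0 := fun y hy => by
    have h := hμinv y; rw [hy, zero_mul] at h; exact zero_ne_one h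
  constructor
  · intro hW
    by_cases hf0 : f = 0
    · exact Or.inl hf0
    right
    -- every element is a product of two, resp. three, elements
    have L2 : ∀ s : S, ∃ u v : S, s = u * v := by
      intro s
      let T' : Subsemigroup S :=
        { carrier := {s : S | ∃ u v : S, s = u * v}
          mul_mem' := fun {a b} _ _ => ⟨a, b, rfl⟩ }
      have hle : Subsemigroup.closure {x : S | ∃ y : S, x = y * y} ≤ T' :=
        Subsemigroup.closure_le.mpr (fun x hx => by obtain ⟨y, rfl⟩ := hx; exact ⟨y, y, rfl⟩)
      rw [hSq] at hle
      exact hle (Subsemigroup.mem_top s)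
    have L3 : ∀ s : S, ∃ u v w : S, s = u * (v * w) := by
      intro s
      obtain ⟨u, v, rfl⟩ := L2 s
      obtain ⟨a, b, rfl⟩ := L2 u
      exact ⟨a, b, v, mul_assoc a b v⟩
    -- key identities
    have hT : ∀ x y : S, f (x * y) - μ x * μ y * f (σ (x * y)) =
        2 * f y * g x - 2 * f x * (μ y * g (σ y)) := by
      intro x y
      have w1 := hW x y
      have w2 := hW (σ y) x
      rw [← hσmul] at w2
      linear_combination w1 - μ y * w2
    have hT2 : ∀ x y : S, f (y * x) - μ y * μ x * f (σ (y * x)) =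
        2 * (μ y * f (σ y)) * g x - 2 * (μ x * f (σ x)) * (μ y * g (σ y)) := by
      intro x y
      have w2 := hW (σ y) (σ x)
      rw [← hσmul, hσinv] at w2
      have w3 := hW x (σ y)
      rw [hσinv] at w3
      linear_combination μ y * w3 - μ x * μ y * w2 - f (y * x) * hμinv y +
        μ y * f (x * σ y) * hμinv x
    have hU : ∀ x y : S, f y * g x - f x * (μ y * g (σ y)) =
        (μ x * f (σ x)) * g y - (μ y * f (σ y)) * (μ x * g (σ x)) := by
      intro x y
      have h1 := hT x y
      have h2 := hT2 y x
      linear_combination (h2 - h1) / 2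
    have hU2 : ∀ x y : S, (μ y * f (σ y)) * g x - (μ x * f (σ x)) * (μ y * g (σ y)) =
        f x * g y - f y * (μ x * g (σ x)) := by
      intro x y
      have h1 := hT2 x y
      have h2 := hT y x
      linear_combination (h2 - h1) / 2
    have hUm : ∀ x y : S, (f y - μ y * f (σ y)) * (g x - μ x * g (σ x)) =
        -((f x - μ x * f (σ x)) * (g y - μ y * g (σ y))) := by
      intro x y
      linear_combination hU x y - hU2 x y
    have hhD : ∀ x : S, (f x - μ x * f (σ x)) * (g x - μ x * g (σ x)) = 0 := fun x => by
      linear_combination (hUm x x) / 2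
    have hh2D : ∀ x y : S, (f x - μ x * f (σ x)) ^ 2 * (g y - μ y * g (σ y)) = 0 := by
      intro x y
      linear_combination (f x - μ x * f (σ x)) * hUm x y - (f y - μ y * f (σ y)) * hhD x
    -- f is μ-σ-even
    have hfe : ∀ x : S, f x = μ x * f (σ x) := by
      by_contra hcon
      push_neg at hcon
      obtain ⟨x₀, hx₀⟩ := hcon
      have hx₀' : f x₀ - μ x₀ * f (σ x₀) ≠ 0 := sub_ne_zero.mpr hx₀
      have hD : ∀ y : S, g y = μ y * g (σ y) := by
        intro y
        have h := hh2D x₀ y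
        rcases mul_eq_zero.mp h with h | h
        · exact absurd (pow_eq_zero_iff two_ne_zero |>.mp h) hx₀'
        · exact sub_eq_zero.mp h
      have hsine : ∀ x y : S, f (x * y) - μ x * μ y * f (σ (x * y)) =
          (f y - μ y * f (σ y)) * g x - (f x - μ x * f (σ x)) * g y := by
        intro x y
        linear_combination (hT x y + hT2 y x) / 2 + f x * hD y + (μ y * f (σ y)) * hD x
      let T : Subsemigroup S :=
        { carrier := {s : S | f s = μ s * f (σ s)}
          mul_mem' := by
            intro a b ha hb
            have ha' : f a = μ a * f (σ a) := ha
            have hb' : f b = μ b * f (σ b) := hb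
            show f (a * b) = μ (a * b) * f (σ (a * b))
            rw [hμmul]
            have hs := hsine a b
            linear_combination hs + g a * hb' - g b * ha' }
      have hle : Subsemigroup.closure {x : S | ∃ y : S, x = y * y} ≤ T := by
        apply Subsemigroup.closure_le.mpr
        rintro _ ⟨y, rfl⟩
        show f (y * y) = μ (y * y) * f (σ (y * y))
        rw [hμmul]
        linear_combination hsine y y
      rw [hSq] at hle
      exact hx₀ (hle (Subsemigroup.mem_top x₀))
    have hP : ∀ x y : S, f y * g x = f x * (μ y * g (σ y)) := by
      intro x y
      have h1 := hT x y
      have h2 := hfe (x * y)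
      rw [hμmul] at h2
      linear_combination (h2 - h1) / 2
    obtain ⟨y₀, hy₀⟩ : ∃ y₀ : S, f y₀ ≠ 0 := by
      by_contra h
      push_neg at h
      exact hf0 (funext fun s => h s)
    have hGg : μ y₀ * g (σ y₀) = g y₀ := by
      have h := hP y₀ y₀
      exact (mul_left_cancel₀ hy₀ h).symm
    set c : ℂ := g y₀ / f y₀ with hc_def
    have hgc : ∀ x : S, g x = c * f x := by
      intro x
      have h := hP x y₀
      rw [hGg] at h
      rw [hc_def]
      field_simp
      linear_combination h
    have hGc : ∀ x : S, μ x * g (σ x) = c * f x := by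
      intro x
      have h := hP y₀ x
      rw [hc_def]
      field_simp
      linear_combination -h
    by_cases hc : c = 0
    · exfalso
      have hg0 : ∀ x : S, g x = 0 := fun x => by rw [hgc x, hc, zero_mul]
      apply hf0
      funext s
      obtain ⟨u, v, w, rfl⟩ := L3 s
      have key : f (σ (v * w) * u) = 0 := by
        have w1 := hW u (v * w)
        have w2 := hW (u * v) w
        have w3 := hW (σ w * u) v
        simp only [hg0, mul_zero] at w1 w2 w3
        rw [hμmul] at w1
        rw [show σ v * (σ w * u) = σ (v * w) * u by rw [hσmul, mul_assoc]] at w3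
        simp only [mul_assoc] at w1 w2 w3
        have h2 : μ v * μ w * f (σ (v * w) * u) = 0 := by
          linear_combination (w1 - w2 + μ w * w3) / 2
        have h3 := mul_eq_zero.mp h2
        rcases h3 with h3 | h3
        · rcases mul_eq_zero.mp h3 with h4 | h4
          · exact absurd h4 (hμne v)
          · exact absurd h4 (hμne w)
        · exact h3
      have w1 := hW u (v * w)
      rw [hg0, key] at w1
      simpa using w1
    · -- the main case: g = c f with c ≠ 0
      have hdA : ∀ x y : S, g (x * y) + μ y * g (σ y * x) = 2 * g x * g y := by
        intro x y
        have w := hW x y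
        linear_combination c * w + hgc (x * y) + μ y * hgc (σ y * x) - 2 * g x * hgc y
      have heven : ∀ x : S, μ x * g (σ x) = g x := fun x => by
        rw [hGc x, ← hgc x]
      obtain ⟨χ, hχmul, hχform⟩ := dalembert_variant_aux σ hσmul μ hμmul g hdA heven
      refine ⟨c⁻¹, inv_ne_zero hc, χ, hχmul, fun x => ?_, hχform⟩
      rw [← hχform x, hgc x]
      field_simp
  · rintro (rfl | ⟨α, hα, χ, hχ, hfform, hgform⟩)
    · intro x y
      simp
    · intro x y
      rw [hfform (x * y), hfform (σ y * x), hfform y, hgform x]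
      simp only [hσmul, hσinv, hμmul, hχ]
      linear_combination (α * μ x * χ y * χ (σ x) / 2) * hμinv y
end

section
/- Let f, g: S → ℂ satisfy f(xy) + μ(y)·f(σ(y)x) = 2f(x)g(y) for all x, y ∈ S. Then f(axy) = g(xy)f(a) + f(ax)g(y) + g(x)[f(ay) − 2f(a)g(y)] for all a, x, y ∈ S. -/
/-- Identity (4.3): any solution `(f, g)` of `f(xy) + μ(y)f(σ(y)x) = 2f(x)g(y)` satisfies
`f(axy) = g(xy)f(a) + f(ax)g(y) + g(x)[f(ay) − 2f(a)g(y)]`. -/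
theorem wilson_variant_triple_identity
{S : Type*} [Semigroup S]
    (hSq : Subsemigroup.closure {x : S | ∃ y : S, x = y * y} = ⊤)
    (σ : S → S) (hσmul : ∀ x y : S, σ (x * y) = σ x * σ y) (hσinv : ∀ x : S, σ (σ x) = x)
    (μ : S → ℂ) (hμmul : ∀ x y : S, μ (x * y) = μ x * μ y) (hμσ : ∀ x : S, μ (x * σ x) = 1)
    (f g : S → ℂ)
    (hfg : ∀ x y : S, f (x * y) + μ y * f (σ y * x) = 2 * f x * g y) :
    ∀ a x y : S,
      f (a * x * y) = g (x * y) * f a + f (a * x) * g y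
        + g x * (f (a * y) - 2 * f a * g y) := by
  intro a x y
  have h1 := hfg a (x * y)
  have h2 := hfg (a * x) y
  have h3 := hfg (σ y * a) x
  have h4 := hfg a y
  rw [hμmul, hσmul] at h1
  simp only [mul_assoc] at *
  linear_combination (h1 + h2 - μ y * h3 - 2 * g x * h4) / 2
end

section
/- Let f, g: S → ℂ satisfy f(xy) + μ(y)·f(σ(y)x) = 2f(x)g(y) for all x, y ∈ S. For each a ∈ S define f_a: S → ℂ by f_a(x) = f(ax) − f(a)g(x). Then for every a ∈ S the pair (f_a, g) satisfies the sine addition law f_a(xy) = f_a(x)g(y) + f_a(y)g(x) for all x, y ∈ S. -/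
/-- Identity (4.5): for any solution `(f, g)` of `f(xy) + μ(y)f(σ(y)x) = 2f(x)g(y)` and any
`a ∈ S`, the pair `(f_a, g)` with `f_a(x) = f(ax) − f(a)g(x)` satisfies the sine addition
law. -/
theorem wilson_variant_sine_addition
{S : Type*} [Semigroup S]
    (hSq : Subsemigroup.closure {x : S | ∃ y : S, x = y * y} = ⊤)
    (σ : S → S) (hσmul : ∀ x y : S, σ (x * y) = σ x * σ y) (hσinv : ∀ x : S, σ (σ x) = x)
    (μ : S → ℂ) (hμmul : ∀ x y : S, μ (x * y) = μ x * μ y) (hμσ : ∀ x : S, μ (x * σ x) = 1)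
    (f g : S → ℂ)
    (hfg : ∀ x y : S, f (x * y) + μ y * f (σ y * x) = 2 * f x * g y)
    (a : S) (fa : S → ℂ) (hfa : ∀ x : S, fa x = f (a * x) - f a * g x) :
    ∀ x y : S, fa (x * y) = fa x * g y + fa y * g x := by
  intro x y
  have h1 := hfg (a * x) y
  have h2 := hfg (σ y * a) x
  have h3 := hfg a (x * y)
  have h4 := hfg a y
  rw [hσmul, hμmul] at h3
  rw [hfa (x * y), hfa x, hfa y]
  rw [show a * (x * y) = a * x * y from (mul_assoc a x y).symm] at h3 ⊢
  rw [show σ y * (a * x) = σ y * a * x from (mul_assoc (σ y) a x).symm] at h1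
  rw [show σ x * (σ y * a) = σ x * σ y * a from (mul_assoc (σ x) (σ y) a).symm] at h2
  linear_combination (h1 - μ y * h2 + h3 - 2 * g x * h4) / 2
end

section
/- Let f, g: S → ℂ satisfy f(xy) + μ(y)·f(σ(y)x) = 2f(x)g(y) for all x, y ∈ S. Suppose f ≠ 0 and f(xy) = f(x)g(y) for all x, y ∈ S. Then g is a nonzero multiplicative function satisfying g* = g, and there exists a constant λ ∈ ℂ \ {0} such that f = λg. -/
/-- Case 1 of the proof of Theorem 4.2: if `(f, g)` solves
`f(xy) + μ(y)f(σ(y)x) = 2f(x)g(y)` with `f ≠ 0` and `f(xy) = f(x)g(y)` for all `x, y`,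
then `g` is a nonzero multiplicative function with `g* = g`, and `f = λg` for some
nonzero constant `λ`. -/
theorem wilson_variant_case_fa_zero
{S : Type*} [Semigroup S]
    (hSq : Subsemigroup.closure {x : S | ∃ y : S, x = y * y} = ⊤)
    (σ : S → S) (hσmul : ∀ x y : S, σ (x * y) = σ x * σ y) (hσinv : ∀ x : S, σ (σ x) = x)
    (μ : S → ℂ) (hμmul : ∀ x y : S, μ (x * y) = μ x * μ y) (hμσ : ∀ x : S, μ (x * σ x) = 1)
    (f g : S → ℂ)
    (hfg : ∀ x y : S, f (x * y) + μ y * f (σ y * x) = 2 * f x * g y)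
    (hf0 : f ≠ 0)
    (heig : ∀ x y : S, f (x * y) = f x * g y) :
    (∀ x y : S, g (x * y) = g x * g y) ∧ g ≠ 0 ∧
      (∀ x : S, μ x * g (σ x) = g x) ∧
      ∃ lam : ℂ, lam ≠ 0 ∧ ∀ x : S, f x = lam * g x := by
  have hprod : ∀ x : S, ∃ a b : S, x = a * b := by
    intro x
    have hx : x ∈ Subsemigroup.closure {x : S | ∃ y : S, x = y * y} := by
      rw [hSq]; trivial
    induction hx using Subsemigroup.closure_induction with
    | mem z hz => obtain ⟨y, rfl⟩ := hz; exact ⟨y, y, rfl⟩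
    | mul a b _ _ _ _ => exact ⟨a, b, rfl⟩
  have key : ∀ x y : S, μ y * f (σ y) * g x = f x * g y := by
    intro x y
    have h1 := hfg x y
    rw [heig x y, heig (σ y) x] at h1
    linear_combination h1
  have hfne : ∃ x, f x ≠ 0 := by
    by_contra h; push_neg at h; exact hf0 (funext h)
  obtain ⟨y0, hy0⟩ : ∃ y0, g y0 ≠ 0 := by
    by_contra h
    push_neg at h
    apply hf0
    funext x
    obtain ⟨a, b, rfl⟩ := hprod x
    simp [heig, h]
  set lam := μ y0 * f (σ y0) / g y0 with hlam
  have hflam : ∀ x, f x = lam * g x := by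
    intro x
    have h := key x y0
    rw [hlam]
    field_simp
    linear_combination -h
  have hlamne : lam ≠ 0 := by
    obtain ⟨x1, hx1⟩ := hfne
    intro h
    exact hx1 (by rw [hflam x1, h, zero_mul])
  refine ⟨?_, ?_, ?_, lam, hlamne, hflam⟩
  · intro x y
    have h1 : lam * g (x * y) = lam * (g x * g y) := by
      rw [← hflam, heig, hflam]; ring
    exact mul_left_cancel₀ hlamne h1
  · intro h; apply hy0; rw [h]; rfl
  · intro x
    have h1 := key y0 x
    rw [hflam (σ x), hflam y0] at h1
    have h2 : lam * (g y0 * (μ x * g (σ x))) = lam * (g y0 * g x) := by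
      linear_combination h1
    exact mul_left_cancel₀ hy0 (mul_left_cancel₀ hlamne h2)
end

section
/- Let f, g: S → ℂ satisfy f(xy) + μ(y)·f(σ(y)x) = 2f(x)g(y) for all x, y ∈ S. Then f(xyz) = μ(xy)·f(z)·g(σ(x)σ(y)) + f(x)·g(yz) − μ(yz)·f(σ(y))·g(σ(z)x) for all x, y, z ∈ S. -/
/-- Identity (4.10): any solution `(f, g)` of `f(xy) + μ(y)f(σ(y)x) = 2f(x)g(y)` satisfies
`f(xyz) = μ(xy)f(z)g(σ(x)σ(y)) + f(x)g(yz) − μ(yz)f(σ(y))g(σ(z)x)`. -/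
theorem wilson_variant_triple_identity_second
{S : Type*} [Semigroup S]
    (hSq : Subsemigroup.closure {x : S | ∃ y : S, x = y * y} = ⊤)
    (σ : S → S) (hσmul : ∀ x y : S, σ (x * y) = σ x * σ y) (hσinv : ∀ x : S, σ (σ x) = x)
    (μ : S → ℂ) (hμmul : ∀ x y : S, μ (x * y) = μ x * μ y) (hμσ : ∀ x : S, μ (x * σ x) = 1)
    (f g : S → ℂ)
    (hfg : ∀ x y : S, f (x * y) + μ y * f (σ y * x) = 2 * f x * g y) :
    ∀ x y z : S,
      f (x * y * z) = μ (x * y) * f z * g (σ x * σ y) + f x * g (y * z)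
        - μ (y * z) * f (σ y) * g (σ z * x) := by
  intro x y z
  have E1 := hfg x (y * z)
  have E2 := hfg (σ y) (σ z * x)
  have E3 := hfg z (σ x * σ y)
  have hx := hμσ x
  have hy := hμσ y
  have hz := hμσ z
  simp only [hσmul, hσinv, hμmul, mul_assoc] at E1 E2 E3 hx hy hz ⊢
  linear_combination (1/2 : ℂ) * E1 - (μ y * μ z / 2) * E2
    + (μ x * μ y * μ z * μ (σ z) / 2) * E3
    + (μ x * μ y * f z * g (σ x * σ y) - f (x * (y * z)) / 2) * hz
    - (f (x * (y * z)) * μ z * μ (σ z) / 2) * hy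
    - (f (x * (y * z)) * μ z * μ (σ z) * μ y * μ (σ y) / 2) * hx
end

section
/- Let f, g: S → ℂ satisfy f(xy) + μ(y)·f(σ(y)x) = 2f(x)g(y) for all x, y ∈ S. Then f(xy)g(z) + g(y)f(xz) − 2f(x)g(y)g(z) = μ(xy)·f(z)·g(σ(x)σ(y)) − μ(yz)·f(σ(y))·g(σ(z)x) for all x, y, z ∈ S. -/
/-- Identity (4.11): any solution `(f, g)` of `f(xy) + μ(y)f(σ(y)x) = 2f(x)g(y)` satisfies
`f(xy)g(z) + g(y)f(xz) − 2f(x)g(y)g(z) = μ(xy)f(z)g(σ(x)σ(y)) − μ(yz)f(σ(y))g(σ(z)x)`. -/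
theorem wilson_variant_combined_identity
{S : Type*} [Semigroup S]
    (hSq : Subsemigroup.closure {x : S | ∃ y : S, x = y * y} = ⊤)
    (σ : S → S) (hσmul : ∀ x y : S, σ (x * y) = σ x * σ y) (hσinv : ∀ x : S, σ (σ x) = x)
    (μ : S → ℂ) (hμmul : ∀ x y : S, μ (x * y) = μ x * μ y) (hμσ : ∀ x : S, μ (x * σ x) = 1)
    (f g : S → ℂ)
    (hfg : ∀ x y : S, f (x * y) + μ y * f (σ y * x) = 2 * f x * g y) :
    ∀ x y z : S,
      f (x * y) * g z + g y * f (x * z) - 2 * f x * g y * g z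
        = μ (x * y) * f z * g (σ x * σ y) - μ (y * z) * f (σ y) * g (σ z * x) := by
  intro x y z
  have u : ∀ s : S, μ s * μ (σ s) = 1 := fun s => by rw [← hμmul]; exact hμσ s
  have star : ∀ a b c : S, f a * g (b * c) =
      2 * f a * g b * g c - μ b * f (σ b * a) * g c - μ c * f (σ c * a) * g b
        + μ b * μ c * f (σ b * (σ c * a)) := by
    intro a b c
    have A := hfg a (b * c)
    have B := hfg (a * b) c
    have C := hfg (σ c * a) b
    have D := hfg a b
    simp only [hσmul, hμmul, mul_assoc] at A B C D
    linear_combination (-(1:ℂ)/2) * A + ((1:ℂ)/2) * B - (μ c / 2) * C + (g c) * D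
  have T1 : ∀ a b c : S, f a * g (b * c) - f a * g (c * b)
      = μ b * μ c * (f (σ b * (σ c * a)) - f (σ c * (σ b * a))) := by
    intro a b c
    linear_combination star a b c - star a c b
  have I2 := hfg (x * z) y
  have I3 := hfg x y
  have I5 := hfg (σ y * x) z
  have I6 := hfg z (σ x * σ y)
  have I7 := hfg (σ y) (σ z * x)
  have I8 := hfg x (z * y)
  have I9 := hfg x (y * z)
  have hT := T1 x z y
  have ux := u x
  have uy := u y
  have uz := u z
  simp only [hσmul, hσinv, hμmul, mul_assoc] at I2 I3 I5 I6 I7 I8 I9 ⊢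
  linear_combination (-(1:ℂ)/2) * I2 + (μ y / 2) * I5 + (g z) * I3
    + (μ x * μ y / 2) * I6 - (μ y * μ z / 2) * I7
    + (μ x * μ y * f (z * (σ x * σ y)) / 2) * uz
    - (μ y * μ (σ y) * f (x * (y * z)) / 2) * ux
    - (f (x * (y * z)) / 2) * uy
    + ((1:ℂ)/2) * I8 - ((1:ℂ)/2) * I9 + hT
end

section
/- Let f, g: S → ℂ satisfy f(xy) + μ(y)·f(σ(y)x) = 2f(y)g(x) for all x, y ∈ S. Then the odd part f^o of f satisfies f^o(xy) = g(x)f(y) − f(x)g*(y) for all x, y ∈ S. -/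
/-- Identity (5.1): if `(f, g)` solves `f(xy) + μ(y)f(σ(y)x) = 2f(y)g(x)`, then the odd
part `f^o = (f − f*)/2` of `f` satisfies `f^o(xy) = g(x)f(y) − f(x)g*(y)`, where
`F*(x) = μ(x)F(σ(x))`. -/
theorem wilson_variant_second_odd_part_identity
{S : Type*} [Semigroup S]
    (hSq : Subsemigroup.closure {x : S | ∃ y : S, x = y * y} = ⊤)
    (σ : S → S) (hσmul : ∀ x y : S, σ (x * y) = σ x * σ y) (hσinv : ∀ x : S, σ (σ x) = x)
    (μ : S → ℂ) (hμmul : ∀ x y : S, μ (x * y) = μ x * μ y) (hμσ : ∀ x : S, μ (x * σ x) = 1)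
    (f g : S → ℂ)
    (hfg : ∀ x y : S, f (x * y) + μ y * f (σ y * x) = 2 * f y * g x)
    (fo : S → ℂ) (hfo : ∀ x : S, fo x = (f x - μ x * f (σ x)) / 2) :
    ∀ x y : S, fo (x * y) = g x * f y - f x * (μ y * g (σ y)) := by
  intro x y
  have h1 := hfg x y
  have h3 := hfg (σ y) x
  rw [hfo, hσmul, hμmul]
  linear_combination (h1 - μ y * h3) / 2
end

section
/- Let f, g: S → ℂ satisfy f(xy) + μ(y)·f(σ(y)x) = 2f(y)g(x) for all x, y ∈ S. Then the even and odd parts of f and g satisfy f^e(xy) + μ(y)·f^e(σ(y)x) = 2g^e(x)f^e(y) + 2g^o(x)f^o(y) for all x, y ∈ S. -/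
/-- Identity (5.2): if `(f, g)` solves `f(xy) + μ(y)f(σ(y)x) = 2f(y)g(x)`, then the even
and odd parts `F^e = (F + F*)/2`, `F^o = (F − F*)/2` (with `F*(x) = μ(x)F(σ(x))`) satisfy
`f^e(xy) + μ(y)f^e(σ(y)x) = 2g^e(x)f^e(y) + 2g^o(x)f^o(y)`. -/
theorem wilson_variant_second_even_part_identity
{S : Type*} [Semigroup S]
    (hSq : Subsemigroup.closure {x : S | ∃ y : S, x = y * y} = ⊤)
    (σ : S → S) (hσmul : ∀ x y : S, σ (x * y) = σ x * σ y) (hσinv : ∀ x : S, σ (σ x) = x)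
    (μ : S → ℂ) (hμmul : ∀ x y : S, μ (x * y) = μ x * μ y) (hμσ : ∀ x : S, μ (x * σ x) = 1)
    (f g : S → ℂ)
    (hfg : ∀ x y : S, f (x * y) + μ y * f (σ y * x) = 2 * f y * g x)
    (fe fo ge go : S → ℂ)
    (hfe : ∀ x : S, fe x = (f x + μ x * f (σ x)) / 2)
    (hfo : ∀ x : S, fo x = (f x - μ x * f (σ x)) / 2)
    (hge : ∀ x : S, ge x = (g x + μ x * g (σ x)) / 2)
    (hgo : ∀ x : S, go x = (g x - μ x * g (σ x)) / 2) :
    ∀ x y : S, fe (x * y) + μ y * fe (σ y * x) = 2 * ge x * fe y + 2 * go x * fo y := by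
  intro x y
  have hμ : μ y * μ (σ y) = 1 := by rw [← hμmul, hμσ]
  have h1 := hfg x y
  have h2 := hfg (σ x) (σ y)
  simp only [hfe, hfo, hge, hgo, hσmul, hσinv, hμmul] at *
  linear_combination h1/2 + (μ x * μ y)/2 * h2
end

section
/- Let f, g: S → ℂ satisfy f(xy) + μ(y)·f(σ(y)x) = 2f(y)g(x) for all x, y ∈ S. Then g^e(x)f^e(y) − g^e(y)f^e(x) = 0 and g^o(x)f^o(y) + g^o(y)f^o(x) = 0 for all x, y ∈ S. -/
/-- Identities (5.4) and (5.5): if `(f, g)` solves `f(xy) + μ(y)f(σ(y)x) = 2f(y)g(x)`,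
then the even and odd parts `F^e = (F + F*)/2`, `F^o = (F − F*)/2`
(with `F*(x) = μ(x)F(σ(x))`) satisfy `g^e(x)f^e(y) − g^e(y)f^e(x) = 0` and
`g^o(x)f^o(y) + g^o(y)f^o(x) = 0`. -/
theorem wilson_variant_second_even_odd_relations
{S : Type*} [Semigroup S]
    (hSq : Subsemigroup.closure {x : S | ∃ y : S, x = y * y} = ⊤)
    (σ : S → S) (hσmul : ∀ x y : S, σ (x * y) = σ x * σ y) (hσinv : ∀ x : S, σ (σ x) = x)
    (μ : S → ℂ) (hμmul : ∀ x y : S, μ (x * y) = μ x * μ y) (hμσ : ∀ x : S, μ (x * σ x) = 1)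
    (f g : S → ℂ)
    (hfg : ∀ x y : S, f (x * y) + μ y * f (σ y * x) = 2 * f y * g x)
    (fe fo ge go : S → ℂ)
    (hfe : ∀ x : S, fe x = (f x + μ x * f (σ x)) / 2)
    (hfo : ∀ x : S, fo x = (f x - μ x * f (σ x)) / 2)
    (hge : ∀ x : S, ge x = (g x + μ x * g (σ x)) / 2)
    (hgo : ∀ x : S, go x = (g x - μ x * g (σ x)) / 2) :
    (∀ x y : S, ge x * fe y - ge y * fe x = 0) ∧
      (∀ x y : S, go x * fo y + go y * fo x = 0) := by
  have hμ1 : ∀ x : S, μ x * μ (σ x) = 1 := fun x => by rw [← hμmul]; exact hμσ x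
  -- (C): f(xy) - μ(x)μ(y) f(σx σy) = 2 f(y) g(x) - 2 μ(y) f(x) g(σy)
  have hC : ∀ x y : S, f (x * y) - μ x * μ y * f (σ x * σ y)
      = 2 * f y * g x - 2 * μ y * f x * g (σ y) := by
    intro x y
    have h1 := hfg x y
    have h2 := hfg (σ y) x
    linear_combination h1 - μ y * h2
  -- key identity (D)
  have hD : ∀ x y : S, f y * g x + μ x * μ y * f (σ y) * g (σ x)
      = μ x * f (σ x) * g y + μ y * f x * g (σ y) := by
    intro x y
    have h3 := hC x y
    have h4 := hC (σ x) (σ y)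
    rw [hσinv x, hσinv y] at h4
    have e1 := hμ1 x
    have e2 := hμ1 y
    linear_combination (-(1:ℂ)/2) * h3 - (μ x * μ y / 2) * h4
      - (f (x * y) * μ y * μ (σ y) / 2) * e1 - (f (x * y) / 2) * e2
      + (μ x * f (σ x) * g y) * e2
  constructor
  · intro x y
    rw [hge x, hge y, hfe x, hfe y]
    linear_combination (hD x y - hD y x) / 4
  · intro x y
    rw [hgo x, hgo y, hfo x, hfo y]
    linear_combination (hD x y + hD y x) / 4
end

section
/- Let f, g: S → ℂ satisfy f(xy) + μ(y)·f(σ(y)x) = 2f(y)g(x) for all x, y ∈ S, and suppose g* = g. Then f* = f, i.e. the odd part of f vanishes identically. -/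
/-- Case 2 of the proof of Theorem 5.1: if `(f, g)` solves
`f(xy) + μ(y)f(σ(y)x) = 2f(y)g(x)` and `g* = g` (where `F*(x) = μ(x)F(σ(x))`),
then `f* = f`, i.e. the odd part of `f` vanishes. -/
theorem wilson_variant_second_g_even_implies_f_even
{S : Type*} [Semigroup S]
    (hSq : Subsemigroup.closure {x : S | ∃ y : S, x = y * y} = ⊤)
    (σ : S → S) (hσmul : ∀ x y : S, σ (x * y) = σ x * σ y) (hσinv : ∀ x : S, σ (σ x) = x)
    (μ : S → ℂ) (hμmul : ∀ x y : S, μ (x * y) = μ x * μ y) (hμσ : ∀ x : S, μ (x * σ x) = 1)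
    (f g : S → ℂ)
    (hfg : ∀ x y : S, f (x * y) + μ y * f (σ y * x) = 2 * f y * g x)
    (hg : ∀ x : S, μ x * g (σ x) = g x) :
    ∀ x : S, μ x * f (σ x) = f x := by
  have hμinv : ∀ x : S, μ x * μ (σ x) = 1 := fun x => by
    rw [← hμmul]; exact hμσ x
  -- general lemma: any solution F of the equation satisfies
  -- F(xy) - μ(xy) F(σ(xy)) = 2 F(y) g(x) - 2 F(x) g(y)
  have A : ∀ F : S → ℂ, (∀ x y : S, F (x * y) + μ y * F (σ y * x) = 2 * F y * g x) →
      ∀ x y : S, F (x * y) - μ (x * y) * F (σ (x * y)) = 2 * F y * g x - 2 * F x * g y := by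
    intro F hF x y
    have e1 := hF x y
    have e2 := hF (σ y) x
    have hgs := hg y
    rw [hσmul, hμmul]
    linear_combination e1 - μ y * e2 - 2 * F x * hgs
  set h : S → ℂ := fun x => f x - μ x * f (σ x) with hh
  have hAf := A f hfg
  -- h is odd: μ x * h (σ x) = - h x
  have hodd : ∀ x : S, μ x * h (σ x) = - h x := by
    intro x
    simp only [hh, hσinv]
    linear_combination (-(f x)) * hμinv x
  -- h satisfies the same functional equation
  have hEq : ∀ x y : S, h (x * y) + μ y * h (σ y * x) = 2 * h y * g x := by
    intro x y
    have e1 := hAf x y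
    have e2 := hAf (σ y) x
    have hgs := hg y
    simp only [hh]
    linear_combination e1 + μ y * e2 + 2 * f x * hgs - 2 * g x * hgs * 0
  -- apply A to h, use oddness: sine-type equation
  have sine : ∀ x y : S, h (x * y) = h y * g x - h x * g y := by
    intro x y
    have e := A h hEq x y
    have ho := hodd (x * y)
    linear_combination (e + ho) / 2
  -- zero set of h is a subsemigroup containing all squares
  intro x
  have hx : x ∈ Subsemigroup.closure {x : S | ∃ y : S, x = y * y} := by
    rw [hSq]; trivial
  have hz : h x = 0 := by
    induction hx using Subsemigroup.closure_induction with
    | mem z hz =>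
      obtain ⟨y, rfl⟩ := hz
      rw [sine y y]; ring
    | mul a b _ _ ha hb =>
      rw [sine a b, ha, hb]; ring
  simp only [hh] at hz
  linear_combination -hz
end

section
/- Let f, g: S → ℂ satisfy f(xy) + μ(y)·f(σ(y)x) = 2f(y)g(x) for all x, y ∈ S, and suppose f ≠ 0 and f* = f. Then there exists a constant λ ∈ ℂ \ {0} such that g = λf, and g satisfies the variant d'Alembert functional equation g(xy) + μ(y)·g(σ(y)x) = 2g(x)g(y) for all x, y ∈ S. -/
/-- Case 1 of the proof of Theorem 5.1: if `(f, g)` solves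
`f(xy) + μ(y)f(σ(y)x) = 2f(y)g(x)` with `f ≠ 0` and `f* = f`
(where `F*(x) = μ(x)F(σ(x))`), then `g = λf` for some nonzero constant `λ`, and `g`
satisfies the variant d'Alembert equation `g(xy) + μ(y)g(σ(y)x) = 2g(x)g(y)`. -/
theorem wilson_variant_second_f_even_case
{S : Type*} [Semigroup S]
    (hSq : Subsemigroup.closure {x : S | ∃ y : S, x = y * y} = ⊤)
    (σ : S → S) (hσmul : ∀ x y : S, σ (x * y) = σ x * σ y) (hσinv : ∀ x : S, σ (σ x) = x)
    (μ : S → ℂ) (hμmul : ∀ x y : S, μ (x * y) = μ x * μ y) (hμσ : ∀ x : S, μ (x * σ x) = 1)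
    (f g : S → ℂ)
    (hfg : ∀ x y : S, f (x * y) + μ y * f (σ y * x) = 2 * f y * g x)
    (hf0 : f ≠ 0)
    (hf : ∀ x : S, μ x * f (σ x) = f x) :
    ∃ lam : ℂ, lam ≠ 0 ∧ (∀ x : S, g x = lam * f x) ∧
      ∀ x y : S, g (x * y) + μ y * g (σ y * x) = 2 * g x * g y := by
  have hμ2 : ∀ x : S, μ x * μ (σ x) = 1 := fun x => by rw [← hμmul]; exact hμσ x
  obtain ⟨x0, hx0⟩ : ∃ x0, f x0 ≠ 0 := by
    by_contra h
    push_neg at h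
    exact hf0 (funext h)
  -- key symmetry : f y * g x = f x * g y
  have key : ∀ x y : S, f y * g x = f x * g y := by
    intro x y
    have hK : μ y * f (σ y * x) = μ x * f (y * σ x) := by
      have h1 := hf (σ y * x)
      rw [hμmul, hσmul, hσinv] at h1
      linear_combination (-(μ y)) * h1 + (μ x * f (y * σ x)) * hμ2 y
    have e1 := hfg x y
    have e2 := hfg y (σ x)
    rw [hσinv] at e2
    linear_combination (-(1:ℂ)/2) * e1 + (1/2) * hK + (μ x / 2) * e2 +
      g y * hf x - (f (x*y)/2) * hμ2 x
  set lam : ℂ := g x0 / f x0 with hlamdef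
  have hglam : ∀ x : S, g x = lam * f x := by
    intro x
    rw [hlamdef]
    field_simp
    linear_combination key x x0
  refine ⟨lam, ?_, hglam, ?_⟩
  · -- lam ≠ 0
    intro hlam
    have hg0 : ∀ x : S, g x = 0 := by
      intro x; rw [hglam x, hlam, zero_mul]
    have hfg0 : ∀ x y : S, f (x * y) + μ y * f (σ y * x) = 0 := by
      intro x y
      have := hfg x y
      rw [hg0 x] at this
      linear_combination this
    have lemR : ∀ x y : S, f (x * (y * y)) = 0 := by
      intro x y
      have a1 := hfg0 x (y * y)
      have a2 := hfg0 (x * y) y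
      have a3 := hfg0 (σ y * x) y
      simp only [hσmul, hμmul, mul_assoc] at a1 a2 a3 ⊢
      linear_combination (a1 + a2 - μ y * a3) / 2
    have lemL : ∀ x y : S, f ((y * y) * x) = 0 := by
      intro x y
      have a1 := hfg0 (y * y) x
      rw [lemR (σ x) y] at a1
      linear_combination a1
    have lemA : ∀ a ∈ Subsemigroup.closure {x : S | ∃ y : S, x = y * y},
        ∀ w : S, f (a * w) = 0 := by
      intro a ha
      induction ha using Subsemigroup.closure_induction with
      | mem x hx => obtain ⟨c, rfl⟩ := hx; intro w; exact lemL w c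
      | mul x y hx hy px py => intro w; rw [mul_assoc]; exact px (y * w)
    have hmem : ∀ y : S, y ∈ Subsemigroup.closure {x : S | ∃ y : S, x = y * y} := by
      intro y; rw [hSq]; exact Subsemigroup.mem_top y
    apply hf0
    funext y
    have hy := hmem y
    induction hy using Subsemigroup.closure_induction with
    | mem x hx => obtain ⟨c, rfl⟩ := hx; exact lemA c (hmem c) c
    | mul x y hx hy px py => exact lemA x hx y
  · -- d'Alembert equation for g
    intro x y
    have t1 := hglam (x * y)
    have t2 := hglam (σ y * x)
    have t4 := hglam y
    linear_combination t1 + μ y * t2 + lam * hfg x y - 2 * g x * t4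
end

section
/- Let f, g: S → ℂ satisfy f(xy) + μ(y)·f(σ(y)x) = 2f(y)g(x) for all x, y ∈ S, and suppose f ≠ 0. Then g ≠ 0. -/
/-- In the proof of Theorem 5.1: if `(f, g)` solves `f(xy) + μ(y)f(σ(y)x) = 2f(y)g(x)`
on a semigroup generated by its squares and `f ≠ 0`, then `g ≠ 0`. -/
theorem wilson_variant_second_g_nonzero
{S : Type*} [Semigroup S]
    (hSq : Subsemigroup.closure {x : S | ∃ y : S, x = y * y} = ⊤)
    (σ : S → S) (hσmul : ∀ x y : S, σ (x * y) = σ x * σ y) (hσinv : ∀ x : S, σ (σ x) = x)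
    (μ : S → ℂ) (hμmul : ∀ x y : S, μ (x * y) = μ x * μ y) (hμσ : ∀ x : S, μ (x * σ x) = 1)
    (f g : S → ℂ)
    (hfg : ∀ x y : S, f (x * y) + μ y * f (σ y * x) = 2 * f y * g x)
    (hf0 : f ≠ 0) :
    g ≠ 0 := by
  intro hg
  apply hf0
  have E : ∀ x y : S, f (x * y) = -(μ y * f (σ y * x)) := by
    intro x y
    have h := hfg x y
    rw [hg] at h
    simp only [Pi.zero_apply, mul_zero] at h
    exact eq_neg_of_add_eq_zero_left h
  have hμne : ∀ y : S, μ y ≠ 0 := fun y =>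
    left_ne_zero_of_mul_eq_one (by rw [← hμmul]; exact hμσ y)
  -- key : f ((c*c)*x) = 0 for all c x
  have key : ∀ c x : S, f ((c * c) * x) = 0 := by
    intro c x
    set y := σ c with hy
    have hσy : σ y = c := hσinv c
    have h1 : f (x * (y * y)) = -((μ y * μ y) * f ((c * c) * x)) := by
      rw [E x (y * y), hμmul, hσmul, hσy, mul_assoc]
    have h2 : f (x * (y * y)) = (μ y * μ y) * f ((c * c) * x) := by
      have e1 : f (x * (y * y)) = f ((x * y) * y) := by rw [mul_assoc]
      rw [e1, E (x * y) y, hσy]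
      have e2 : c * (x * y) = (c * x) * y := by rw [mul_assoc]
      rw [e2, E (c * x) y, hσy]
      have e3 : c * (c * x) = (c * c) * x := by rw [mul_assoc]
      rw [e3]
      ring
    have hm : (μ y * μ y) ≠ 0 := mul_ne_zero (hμne y) (hμne y)
    have h3 : (μ y * μ y) * f ((c * c) * x) = -((μ y * μ y) * f ((c * c) * x)) :=
      h2.symm.trans h1
    have h4 : (μ y * μ y) * (2 * f ((c * c) * x)) = 0 := by
      rw [mul_comm (2 : ℂ), ← mul_assoc]
      linear_combination h3
    have h5 : (2 : ℂ) * f ((c * c) * x) = 0 := by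
      exact (mul_eq_zero.mp h4).resolve_left hm
    have := mul_eq_zero.mp h5
    simpa using this
  -- structure: every element is a square or square * x
  have Q : ∀ u : S, (∃ c : S, u = c * c) ∨ (∃ c x : S, u = (c * c) * x) := by
    intro u
    have hu : u ∈ Subsemigroup.closure {x : S | ∃ y : S, x = y * y} := by
      rw [hSq]; exact Subsemigroup.mem_top u
    induction hu using Subsemigroup.closure_induction with
    | mem x hx => exact Or.inl hx
    | mul x y hx hy ihx ihy =>
      rcases ihx with ⟨c, rfl⟩ | ⟨c, z, rfl⟩
      · exact Or.inr ⟨c, y, rfl⟩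
      · exact Or.inr ⟨c, z * y, by rw [mul_assoc]⟩
  have fsq : ∀ c : S, f (c * c) = 0 := by
    intro c
    rcases Q c with ⟨d, rfl⟩ | ⟨d, x, rfl⟩
    · have : (d * d) * (d * d) = (d * d) * (d * d) := rfl
      exact key d (d * d)
    · have e : ((d * d) * x) * ((d * d) * x) = (d * d) * (x * ((d * d) * x)) := by
        rw [mul_assoc]
      rw [e]; exact key d _
  funext u
  show f u = 0
  rcases Q u with ⟨c, rfl⟩ | ⟨c, x, rfl⟩
  · exact fsq c
  · exact key c x
end

section
/- Let χ: S → ℂ be a nonzero multiplicative function with χ* = χ, let c ∈ ℂ, and let A: S \ I_χ → ℂ be an additive function with A∘σ = −A on S \ I_χ. Define f, g: S → ℂ by f = χ·(c + A) and g = χ on S \ I_χ, and f = 0 and g = 0 on I_χ. Then f(xy) + μ(y)·f(σ(y)x) = 2f(x)g(y) for all x, y ∈ S. -/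
/-- Converse part of Theorem 4.2, family (3): if `χ` is a nonzero multiplicative function
with `χ* = χ` (where `F*(x) = μ(x)F(σ(x))`), `c ∈ ℂ`, and `A` is additive on
`S \ I_χ = {x : χ(x) ≠ 0}` with `A∘σ = −A` there, then `f = χ(c + A)`, `g = χ` on
`S \ I_χ` and `f = 0`, `g = 0` on `I_χ` solve `f(xy) + μ(y)f(σ(y)x) = 2f(x)g(y)`. -/
theorem wilson_variant_family_three_is_solution
{S : Type*} [Semigroup S]
    (hSq : Subsemigroup.closure {x : S | ∃ y : S, x = y * y} = ⊤)
    (σ : S → S) (hσmul : ∀ x y : S, σ (x * y) = σ x * σ y) (hσinv : ∀ x : S, σ (σ x) = x)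
    (μ : S → ℂ) (hμmul : ∀ x y : S, μ (x * y) = μ x * μ y) (hμσ : ∀ x : S, μ (x * σ x) = 1)
    (χ : S → ℂ) (hχmul : ∀ x y : S, χ (x * y) = χ x * χ y) (hχ0 : χ ≠ 0)
    (hχstar : ∀ x : S, μ x * χ (σ x) = χ x)
    (c : ℂ) (A : S → ℂ)
    (hAadd : ∀ x y : S, χ x ≠ 0 → χ y ≠ 0 → A (x * y) = A x + A y)
    (hAσ : ∀ x : S, χ x ≠ 0 → A (σ x) = -A x)
    (f g : S → ℂ)
    (hfI : ∀ x : S, χ x ≠ 0 → f x = χ x * (c + A x))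
    (hfO : ∀ x : S, χ x = 0 → f x = 0)
    (hgI : ∀ x : S, χ x ≠ 0 → g x = χ x)
    (hgO : ∀ x : S, χ x = 0 → g x = 0) :
    ∀ x y : S, f (x * y) + μ y * f (σ y * x) = 2 * f x * g y := by
  intro x y
  have hμne : ∀ z : S, μ z ≠ 0 := by
    intro z
    have h := hμσ z
    rw [hμmul] at h
    exact left_ne_zero_of_mul_eq_one h
  by_cases hy : χ y = 0
  · have hσy : χ (σ y) = 0 := by
      have h := hχstar y
      rw [hy] at h
      exact (mul_eq_zero.mp h).resolve_left (hμne y)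
    rw [hfO (x * y) (by rw [hχmul, hy, mul_zero]),
        hfO (σ y * x) (by rw [hχmul, hσy, zero_mul]),
        hgO y hy]
    ring
  · by_cases hx : χ x = 0
    · have hσy : χ (σ y) ≠ 0 := by
        intro h
        have h' := hχstar y
        rw [h, mul_zero] at h'
        exact hy h'.symm
      rw [hfO (x * y) (by rw [hχmul, hx, zero_mul]),
          hfO (σ y * x) (by rw [hχmul, hx, mul_zero]),
          hfO x hx]
      ring
    · have hσy : χ (σ y) ≠ 0 := by
        intro h
        have h' := hχstar y
        rw [h, mul_zero] at h'
        exact hy h'.symm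
      rw [hfI (x * y) (by rw [hχmul]; exact mul_ne_zero hx hy),
          hfI (σ y * x) (by rw [hχmul]; exact mul_ne_zero hσy hx),
          hfI x hx, hgI y hy, hχmul, hχmul,
          hAadd x y hx hy, hAadd (σ y) x hσy hx, hAσ y hy]
      have h := hχstar y
      linear_combination (χ x * (c + (-A y + A x))) * h
end
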